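/- Let G be a connected non-complete simple graph that is 2K2-free, C3-free and C5-free, and let S be a minimal vertex separator of G such that every connected component of G − S is trivial. Let T be the set of vertices forming the trivial components of G − S. Then the minimum cardinality of a feedback vertex set of G equals min{|S| − 1, |T| − 1}. -/

import Mathlib

open SimpleGraph

/-- A simple graph is `2K₂`-free: there are no four pairwise distinct vertices `a b c d`
with `ab` and `cd` edges and none of `ac, ad, bc, bd` an edge. -/
def TwoK2Free {V : Type*} (G : SimpleGraph V) : Prop :=
  ¬ ∃ a b c d : V, a ≠ b ∧ a ≠ c ∧ a ≠ d ∧ b ≠ c ∧ b ≠ d ∧ c ≠ d ∧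
    G.Adj a b ∧ G.Adj c d ∧ ¬ G.Adj a c ∧ ¬ G.Adj a d ∧ ¬ G.Adj b c ∧ ¬ G.Adj b d

/-- `S ⊊ V(G)` is a vertex separator: deleting `S` leaves a disconnected graph. -/
def IsSeparator {V : Type*} (G : SimpleGraph V) (S : Set V) : Prop :=
  S ≠ Set.univ ∧ ¬ (G.induce (Sᶜ : Set V)).Connected

/-- A minimal vertex separator: no proper subset is a separator. -/
def IsMinSeparator {V : Type*} (G : SimpleGraph V) (S : Set V) : Prop :=
  IsSeparator G S ∧ ∀ S' : Set V, S' ⊂ S → ¬ IsSeparator G S'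

/-- A connected component is trivial if its support is a single vertex. -/
def IsTrivialComp {α : Type*} {H : SimpleGraph α} (C : H.ConnectedComponent) : Prop :=
  ∃ v, C.supp = {v}

/-- `G` has no induced cycle on `n` vertices. -/
def NoInducedCycle {V : Type*} (n : ℕ) (G : SimpleGraph V) : Prop :=
  ¬ Nonempty (cycleGraph n ↪g G)

/-- `F` is a feedback vertex set of `G`: deleting `F` leaves a forest. -/
def IsFVS {V : Type*} (G : SimpleGraph V) (F : Set V) : Prop :=
  (G.induce (Fᶜ : Set V)).IsAcyclic

/-!
Since every component of `G − S` is a single vertex, `Sᶜ` is independent. Minimality of `S`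
makes each `s ∈ S` adjacent to every vertex outside `S` (a path from such a vertex to `s`
avoiding `S \ {s}` must step straight into `s`), and triangle-freeness then makes `S`
independent as well. So `G` is complete bipartite with sides `S` and `T = Sᶜ`. Deleting all but
one vertex of one side leaves a star, whereas a smaller deletion keeps two vertices on each
side, hence a 4-cycle.
-/

namespace SimpleGraph

variable {V : Type*} {G : SimpleGraph V}

lemma isAcyclic_of_forall_adj_eq_or_eq (x : V) (h : ∀ u v, G.Adj u v → u = x ∨ v = x) :
    G.IsAcyclic :=
  (isAcyclic_starGraph x).anti fun u v huv => starGraph_adj.mpr ⟨huv.ne, h u v huv⟩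

lemma not_isAcyclic_of_four_cycle {a b c d : V} (hab : G.Adj a b) (hbc : G.Adj b c)
    (hcd : G.Adj c d) (hda : G.Adj d a) (hac : a ≠ c) (hbd : b ≠ d) : ¬ G.IsAcyclic := by
  intro hG
  refine hG (.cons hda (.cons hab (.cons hbc (.cons hcd .nil)))) ?_
  have := hab.ne; have := hbc.ne; have := hcd.ne; have := hda.ne
  simp only [Walk.cons_isCycle_iff, Walk.cons_isPath_iff, Walk.IsPath.nil, Walk.support_cons,
    Walk.support_nil, Walk.edges_cons, Walk.edges_nil, List.mem_cons, List.not_mem_nil,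
    Sym2.eq, Sym2.rel_iff', Prod.mk.injEq, Prod.swap_prod_mk]
  tauto

lemma isIndepSet_of_forall_isTrivialComp {s : Set V}
    (h : ∀ C : (G.induce s).ConnectedComponent, IsTrivialComp C) : G.IsIndepSet s := by
  intro a ha b hb hne hab
  obtain ⟨w, hw⟩ := h ((G.induce s).connectedComponentMk ⟨a, ha⟩)
  have hb' : (⟨b, hb⟩ : s) ∈ ((G.induce s).connectedComponentMk ⟨a, ha⟩).supp :=
    (ConnectedComponent.connectedComponentMk_eq_of_adj (by simpa using hab)).symm
  have ha' : (⟨a, ha⟩ : s) ∈ ((G.induce s).connectedComponentMk ⟨a, ha⟩).supp := rfl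
  rw [hw] at ha' hb'
  exact hne (congrArg Subtype.val (ha'.trans hb'.symm))

lemma cliqueFree_three_of_noInducedCycle_three (h : NoInducedCycle 3 G) : G.CliqueFree 3 := by
  by_contra hG
  exact h ⟨cycleGraph_three_eq_top ▸ topEmbeddingOfNotCliqueFree hG⟩

lemma IsMinSeparator.adj {S : Set V} (hS : IsMinSeparator G S) (hSc : G.IsIndepSet Sᶜ)
    {s v : V} (hs : s ∈ S) (hv : v ∉ S) : G.Adj s v := by
  have hv' : v ∈ (S \ {s})ᶜ := fun h => hv h.1
  have hs' : s ∈ (S \ {s})ᶜ := fun h => h.2 rfl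
  have hconn : (G.induce (S \ {s})ᶜ).Connected := by
    by_contra hdisc
    exact hS.2 _ (Set.sdiff_singleton_ssubset.mpr hs) ⟨fun h => hv' (h ▸ Set.mem_univ v), hdisc⟩
  have : Nontrivial ((S \ {s})ᶜ : Set V) :=
    ⟨⟨v, hv'⟩, ⟨s, hs'⟩, ne_of_apply_ne Subtype.val (ne_of_mem_of_not_mem hs hv).symm⟩
  obtain ⟨⟨w, hw⟩, hvw⟩ := hconn.preconnected.exists_adj_of_nontrivial ⟨v, hv'⟩
  rw [comap_adj, Function.Embedding.subtype_apply] at hvw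
  by_cases hwS : w ∈ S
  · obtain rfl : w = s := by simpa [hwS] using hw
    exact hvw.symm
  · exact absurd hvw (hSc hv hwS hvw.ne)

lemma isFVS_compl {B : Set V} (hB : G.IsIndepSet B) : IsFVS G Bᶜ :=
  isAcyclic_bot.anti fun u v huv => hB (by simpa using u.2) (by simpa using v.2)
    (Subtype.val_injective.ne huv.ne) (by simpa using huv)

lemma isFVS_compl_sdiff_singleton {B : Set V} (hB : G.IsIndepSet B) (x : V) :
    IsFVS G (Bᶜ \ {x}) := by
  have hx : x ∈ (Bᶜ \ {x})ᶜ := fun h => h.2 rfl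
  refine isAcyclic_of_forall_adj_eq_or_eq ⟨x, hx⟩ fun ⟨u, hu⟩ ⟨v, hv⟩ huv => ?_
  simp only [Set.mem_compl_iff, Set.mem_sdiff, Set.mem_singleton_iff, not_and, not_not] at hu hv
  rw [comap_adj, Function.Embedding.subtype_apply, Function.Embedding.subtype_apply] at huv
  by_cases huB : u ∈ B
  · exact .inr (Subtype.ext (hv fun hvB => hB huB hvB huv.ne huv))
  · exact .inl (Subtype.ext (hu huB))

lemma exists_isFVS_ncard_eq [Finite V] {B : Set V} (hB : G.IsIndepSet B) :
    ∃ F, IsFVS G F ∧ F.ncard = Bᶜ.ncard - 1 := by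
  rcases Bᶜ.eq_empty_or_nonempty with h | ⟨x, hx⟩
  · exact ⟨Bᶜ, isFVS_compl hB, by simp [h]⟩
  · exact ⟨Bᶜ \ {x}, isFVS_compl_sdiff_singleton hB x, Set.ncard_sdiff_singleton_of_mem hx⟩

lemma min_ncard_sub_one_le_ncard_of_isFVS [Finite V] {A F : Set V}
    (hadj : ∀ a ∈ A, ∀ b ∉ A, G.Adj a b) (hF : IsFVS G F) :
    min (A.ncard - 1) (Aᶜ.ncard - 1) ≤ F.ncard := by
  have two_le {X : Set V} (hX : F.ncard < X.ncard - 1) : ∃ x y, x ∈ X \ F ∧ y ∈ X \ F ∧ x ≠ y :=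
    (Set.one_lt_ncard_iff).mp (by have := Set.le_ncard_sdiff F X; omega)
  by_contra! h
  obtain ⟨a, a', ⟨ha, haF⟩, ⟨ha', ha'F⟩, hne⟩ := two_le (lt_of_lt_of_le h (min_le_left _ _))
  obtain ⟨b, b', ⟨hb, hbF⟩, ⟨hb', hb'F⟩, hne'⟩ := two_le (lt_of_lt_of_le h (min_le_right _ _))
  refine not_isAcyclic_of_four_cycle (G := G.induce Fᶜ) (a := ⟨a, haF⟩) (b := ⟨b, hbF⟩)
    (c := ⟨a', ha'F⟩) (d := ⟨b', hb'F⟩) ?_ ?_ ?_ ?_ ?_ ?_ hF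
  · simpa using hadj a ha b hb
  · simpa using (hadj a' ha' b hb).symm
  · simpa using hadj a' ha' b' hb'
  · simpa using (hadj a ha b' hb').symm
  · exact ne_of_apply_ne Subtype.val hne
  · exact ne_of_apply_ne Subtype.val hne'

theorem isLeast_ncard_isFVS_of_completeBipartite [Finite V] {A : Set V} (hA : G.IsIndepSet A)
    (hAc : G.IsIndepSet Aᶜ) (hadj : ∀ a ∈ A, ∀ b ∉ A, G.Adj a b) :
    IsLeast {n : ℕ | ∃ F : Set V, IsFVS G F ∧ F.ncard = n}
      (min (A.ncard - 1) (Aᶜ.ncard - 1)) := by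
  refine ⟨?_, fun n ⟨F, hF, hn⟩ => hn ▸ min_ncard_sub_one_le_ncard_of_isFVS hadj hF⟩
  rcases le_total A.ncard Aᶜ.ncard with h | h
  · obtain ⟨F, hF, hn⟩ := exists_isFVS_ncard_eq hAc
    exact ⟨F, hF, by rw [hn, compl_compl]; omega⟩
  · obtain ⟨F, hF, hn⟩ := exists_isFVS_ncard_eq hA
    exact ⟨F, hF, by omega⟩

end SimpleGraph

theorem fvs_card_allTrivial {V : Type*} [Fintype V] (G : SimpleGraph V)
    (hc3 : NoInducedCycle 3 G)
    (S : Set V) (hS : IsMinSeparator G S)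
    (htriv : ∀ C : (G.induce (Sᶜ : Set V)).ConnectedComponent, IsTrivialComp C)
    (T : Set V)
    (hT : T = {v : V | ∃ h : v ∈ (Sᶜ : Set V),
      IsTrivialComp ((G.induce (Sᶜ : Set V)).connectedComponentMk ⟨v, h⟩)}) :
    IsLeast {n : ℕ | ∃ F : Set V, IsFVS G F ∧ F.ncard = n}
      (min (S.ncard - 1) (T.ncard - 1)) := by
  have hSc : G.IsIndepSet Sᶜ := isIndepSet_of_forall_isTrivialComp htriv
  have hadj : ∀ s ∈ S, ∀ v ∉ S, G.Adj s v := fun s hs v hv => hS.adj hSc hs hv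
  obtain ⟨v, hv⟩ : Sᶜ.Nonempty := Set.nonempty_compl.mpr hS.1.1
  have hG3 : G.CliqueFree 3 := cliqueFree_three_of_noInducedCycle_three hc3
  have hSind : G.IsIndepSet S :=
    (isIndepSet_neighborSet_of_triangleFree _ hG3 v).mono fun s hs => (hadj s hs v hv).symm
  have hTS : T = Sᶜ := by
    subst hT
    ext u
    exact ⟨fun ⟨h, _⟩ => h, fun h => ⟨h, htriv _⟩⟩
  exact hTS ▸ isLeast_ncard_isFVS_of_completeBipartite hSind hSc hadj
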